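/- arXiv:1608.02343 — 4 statements merged into one kernel-verified Lean document; each statement's English description precedes it below -/
import Mathlib

section
/- Let Ω = (a₁,b₁)×(a₂,b₂)×(a₃,b₃) ⊂ ℝ³ and let u ∈ C²(Ω̄; ℝ³) satisfy u·n = 0 on ∂Ω. Then ∫_Ω |∇u|² dx ≤ ∫_Ω |∇u + ∇ᵀu − (2/3)(div u) I|² dx, where I is the 3×3 identity matrix. -/
open MeasureTheory Set

/-- The Jacobian entry `∂_j u^i` at `x`. -/
noncomputable def jac (u : (Fin 3 → ℝ) → (Fin 3 → ℝ)) (x : Fin 3 → ℝ) (i j : Fin 3) : ℝ :=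
  fderiv ℝ u x (Pi.single j 1) i

/-!
Writing `A = ∇u`, expanding the square gives
`|A + Aᵀ - (2/3) (tr A) I|² = |A|² + (|A|² + (2/3) (tr A)²) + 2 (tr (A²) - (tr A)²)`,
and the middle term is nonnegative. The last term is a null Lagrangian:
`tr ((∇u)²) - (div u)² = div ((u·∇)u - (div u) u)` by symmetry of second derivatives.
On the faces `xᵢ = aᵢ, bᵢ` the normal component `∑ⱼ uⱼ ∂ⱼuᵢ - (div u) uᵢ` of this flux vanishes,
since `uᵢ` and its tangential derivatives `∂ⱼuᵢ`, `j ≠ i`, vanish there; so by the divergence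
theorem the last term integrates to zero over the box.
-/

open Filter Topology

lemma fderiv_apply_eq_zero_of_eventually_eq {E F : Type*} [NormedAddCommGroup E] [NormedSpace ℝ E]
    [NormedAddCommGroup F] [NormedSpace ℝ F] {f : E → F} {x v : E} (hf : DifferentiableAt ℝ f x)
    (h : ∀ᶠ t : ℝ in 𝓝 0, f (x + t • v) = f x) : fderiv ℝ f x v = 0 :=
  (hf.hasFDerivAt.hasLineDerivAt v).unique ((hasDerivAt_const 0 (f x)).congr_of_eventuallyEq h)

noncomputable def nullLagrangianFlux {n : ℕ} (u : (Fin n → ℝ) → Fin n → ℝ) (x : Fin n → ℝ) :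
    Fin n → ℝ :=
  fun k => ∑ j, u x j * fderiv ℝ u x (Pi.single j 1) k
    - (∑ j, fderiv ℝ u x (Pi.single j 1) j) * u x k

section Flux

variable {n : ℕ} {u : (Fin n → ℝ) → Fin n → ℝ}

lemma contDiff_nullLagrangianFlux_apply (hu : ContDiff ℝ 2 u) (k : Fin n) :
    ContDiff ℝ 1 fun x => nullLagrangianFlux u x k := by
  have hu1 : ContDiff ℝ 1 u := hu.of_le (by norm_num)
  have hDu : ContDiff ℝ 1 (fderiv ℝ u) := hu.fderiv_right (by norm_num)
  unfold nullLagrangianFlux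
  fun_prop

lemma fderiv_nullLagrangianFlux_apply (hu : ContDiff ℝ 2 u) (x w : Fin n → ℝ) (k : Fin n) :
    fderiv ℝ (fun y => nullLagrangianFlux u y k) x w =
      ∑ j, (u x j * fderiv ℝ (fderiv ℝ u) x w (Pi.single j 1) k
          + fderiv ℝ u x (Pi.single j 1) k * fderiv ℝ u x w j)
        - ((∑ j, fderiv ℝ u x (Pi.single j 1) j) * fderiv ℝ u x w k
          + u x k * ∑ j, fderiv ℝ (fderiv ℝ u) x w (Pi.single j 1) j) := by
  have hu1 : Differentiable ℝ u := hu.differentiable two_ne_zero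
  have hDu : Differentiable ℝ (fderiv ℝ u) :=
    (hu.fderiv_right (m := 1) (by norm_num)).differentiable one_ne_zero
  have hcomp : ∀ k, fderiv ℝ (fun y => u y k) x w = fderiv ℝ u x w k := fun k => by
    rw [fderiv_apply (hu1 x)]; rfl
  have hcomp2 : ∀ v k, fderiv ℝ (fun y => fderiv ℝ u y v k) x w =
      fderiv ℝ (fderiv ℝ u) x w v k := fun v k => by
    rw [fderiv_apply (by fun_prop), fderiv_clm_apply (by fun_prop) (by fun_prop)]
    simp
  unfold nullLagrangianFlux
  simp (disch := fun_prop) only [fderiv_fun_sub, fderiv_fun_sum, fderiv_fun_mul, sub_apply,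
    add_apply, sum_apply, smul_apply, smul_eq_mul, hcomp, hcomp2]

lemma sum_fderiv_nullLagrangianFlux_apply_single (hu : ContDiff ℝ 2 u) (x : Fin n → ℝ) :
    ∑ k, fderiv ℝ (fun y => nullLagrangianFlux u y k) x (Pi.single k 1) =
      ∑ i, ∑ j, fderiv ℝ u x (Pi.single j 1) i * fderiv ℝ u x (Pi.single i 1) j
        - (∑ k, fderiv ℝ u x (Pi.single k 1) k) ^ 2 := by
  have hsymm : IsSymmSndFDerivAt ℝ u x := hu.contDiffAt.isSymmSndFDerivAt (by simp)
  have hsecond : ∑ k, ∑ j, u x j * fderiv ℝ (fderiv ℝ u) x (Pi.single k 1) (Pi.single j 1) k =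
      ∑ k, u x k * ∑ j, fderiv ℝ (fderiv ℝ u) x (Pi.single k 1) (Pi.single j 1) j := by
    rw [Finset.sum_comm]
    simp only [Finset.mul_sum]
    refine Finset.sum_congr rfl fun k _ => Finset.sum_congr rfl fun j _ => ?_
    rw [hsymm.eq]
  simp only [fderiv_nullLagrangianFlux_apply hu, Finset.sum_sub_distrib, Finset.sum_add_distrib,
    ← Finset.mul_sum, hsecond]
  ring

lemma nullLagrangianFlux_apply_eq_zero_of_mem_face {a b : Fin n → ℝ} (hu : ContDiff ℝ 2 u)
    (hbc : ∀ i : Fin n, ∀ x ∈ univ.pi (fun j => Icc (a j) (b j)),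
      (x i = a i ∨ x i = b i) → u x i = 0)
    {x : Fin n → ℝ} {i : Fin n} (hx : x ∈ Icc a b) (hxi : x i = a i ∨ x i = b i)
    (hint : ∀ j ≠ i, x j ∈ Ioo (a j) (b j)) : nullLagrangianFlux u x i = 0 := by
  have hui : u x i = 0 := hbc i x (by rwa [pi_univ_Icc]) hxi
  have htangent : ∀ j ≠ i, fderiv ℝ u x (Pi.single j 1) i = 0 := by
    intro j hj
    have hline : ∀ᶠ t : ℝ in 𝓝 0, u (x + t • Pi.single j 1) i = u x i := by
      filter_upwards [Ioo_mem_nhds (sub_neg.2 (hint j hj).1) (sub_pos.2 (hint j hj).2)] with t ht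
      rw [hui]
      refine hbc i _ (fun k _ => ?_) (by simpa [hj.symm] using hxi)
      rcases eq_or_ne k j with rfl | hk
      · simp only [Pi.add_apply, Pi.smul_apply, Pi.single_eq_same, smul_eq_mul, mul_one]
        constructor <;> linarith [ht.1, ht.2]
      · simpa [hk] using ⟨hx.1 k, hx.2 k⟩
    have hux := hu.differentiable two_ne_zero x
    have := fderiv_apply_eq_zero_of_eventually_eq (f := fun y => u y i) (by fun_prop) hline
    rwa [fderiv_apply hux] at this
  simp only [nullLagrangianFlux, hui, mul_zero, sub_zero]
  refine Finset.sum_eq_zero fun j _ => ?_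
  rcases eq_or_ne j i with rfl | hj
  · rw [hui, zero_mul]
  · rw [htangent j hj, mul_zero]

end Flux

theorem integral_Icc_sum_mul_sub_sq_eq_zero {n : ℕ} {u : (Fin (n + 1) → ℝ) → Fin (n + 1) → ℝ}
    {a b : Fin (n + 1) → ℝ} (hle : a ≤ b) (hu : ContDiff ℝ 2 u)
    (hbc : ∀ i : Fin (n + 1), ∀ x ∈ univ.pi (fun j => Icc (a j) (b j)),
      (x i = a i ∨ x i = b i) → u x i = 0) :
    ∫ x in Icc a b, (∑ i, ∑ j, fderiv ℝ u x (Pi.single j 1) i * fderiv ℝ u x (Pi.single i 1) j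
      - (∑ k, fderiv ℝ u x (Pi.single k 1) k) ^ 2) = 0 := by
  have hflux := contDiff_nullLagrangianFlux_apply hu
  have hface : ∀ i, ∀ c, (c = a i ∨ c = b i) → ∫ y in Icc (a ∘ i.succAbove) (b ∘ i.succAbove),
      nullLagrangianFlux u (i.insertNth c y) i = 0 := by
    intro i c hc
    rw [volume_pi, ← setIntegral_congr_set Measure.univ_pi_Ioo_ae_eq_Icc]
    refine setIntegral_eq_zero_of_forall_eq_zero fun y hy => ?_
    have hy' : ∀ j, y j ∈ Ioo (a (i.succAbove j)) (b (i.succAbove j)) := fun j => hy j (mem_univ j)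
    refine nullLagrangianFlux_apply_eq_zero_of_mem_face hu hbc
      (Fin.insertNth_mem_Icc.2 ⟨?_, fun j => (hy' j).1.le, fun j => (hy' j).2.le⟩)
      (by simpa using hc) fun j hj => ?_
    · rcases hc with rfl | rfl
      exacts [⟨le_rfl, hle i⟩, ⟨hle i, le_rfl⟩]
    · obtain ⟨j, rfl⟩ := Fin.exists_succAbove_eq hj
      simpa using hy' j
  simp_rw [← sum_fderiv_nullLagrangianFlux_apply_single hu]
  rw [integral_divergence_of_hasFDerivAt_off_countable' (a := a) (b := b) hle
    (fun k x => nullLagrangianFlux u x k)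
    (fun k x => fderiv ℝ (fun y => nullLagrangianFlux u y k) x) ∅ countable_empty
    (fun k => (hflux k).continuous.continuousOn)
    (fun x _ k => ((hflux k).differentiable one_ne_zero x).hasFDerivAt)]
  · exact Finset.sum_eq_zero fun i _ => by
      rw [hface i (b i) (Or.inr rfl), hface i (a i) (Or.inl rfl), sub_zero]
  · have := fun k => (hflux k).continuous_fderiv one_ne_zero
    exact Continuous.integrableOn_Icc (by fun_prop)

lemma sum_sq_add_two_mul_le_sum_sq_symm_sub_trace (A : Fin 3 → Fin 3 → ℝ) :
    ∑ i, ∑ j, A i j ^ 2 + 2 * (∑ i, ∑ j, A i j * A j i - (∑ k, A k k) ^ 2) ≤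
      ∑ i, ∑ j, (A i j + A j i - 2 / 3 * (∑ k, A k k) * (if i = j then 1 else 0)) ^ 2 := by
  have hid : ∑ i, ∑ j, (A i j + A j i - 2 / 3 * (∑ k, A k k) * (if i = j then 1 else 0)) ^ 2 =
      ∑ i, ∑ j, A i j ^ 2 + 2 * (∑ i, ∑ j, A i j * A j i - (∑ k, A k k) ^ 2)
        + (∑ i, ∑ j, A i j ^ 2 + 2 / 3 * (∑ k, A k k) ^ 2) := by
    simp only [Fin.sum_univ_three, Fin.isValue, if_true, if_false, Fin.reduceEq]
    ring
  rw [hid]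
  exact le_add_of_nonneg_right (by positivity)

lemma continuous_jac {u : (Fin 3 → ℝ) → Fin 3 → ℝ} (hu : ContDiff ℝ 2 u) (i j : Fin 3) :
    Continuous fun x => jac u x i j := by
  have := hu.continuous_fderiv two_ne_zero
  unfold jac
  fun_prop

theorem stmt1 (a b : Fin 3 → ℝ) (hab : ∀ i, a i < b i)
    (u : (Fin 3 → ℝ) → (Fin 3 → ℝ)) (hu : ContDiff ℝ 2 u)
    (hbc : ∀ i : Fin 3, ∀ x ∈ Set.univ.pi (fun j => Set.Icc (a j) (b j)),
      (x i = a i ∨ x i = b i) → u x i = 0) :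
    (∫ x in Set.univ.pi (fun i => Set.Ioo (a i) (b i)),
        ∑ i : Fin 3, ∑ j : Fin 3, (jac u x i j) ^ 2)
      ≤ (∫ x in Set.univ.pi (fun i => Set.Ioo (a i) (b i)),
          ∑ i : Fin 3, ∑ j : Fin 3,
            (jac u x i j + jac u x j i
              - (2/3) * (∑ k : Fin 3, jac u x k k) * (if i = j then 1 else 0)) ^ 2) := by
  have hbox : (univ.pi fun i => Ioo (a i) (b i)) =ᵐ[volume] Icc a b := by
    rw [volume_pi]; exact Measure.univ_pi_Ioo_ae_eq_Icc
  rw [setIntegral_congr_set hbox, setIntegral_congr_set hbox]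
  have hjac := continuous_jac hu
  have hnull : ∫ x in Icc a b, (∑ i, ∑ j, jac u x i j * jac u x j i - (∑ k, jac u x k k) ^ 2) = 0 :=
    integral_Icc_sum_mul_sub_sq_eq_zero (fun i => (hab i).le) hu hbc
  calc ∫ x in Icc a b, ∑ i, ∑ j, jac u x i j ^ 2
      = ∫ x in Icc a b, (∑ i, ∑ j, jac u x i j ^ 2
          + 2 * (∑ i, ∑ j, jac u x i j * jac u x j i - (∑ k, jac u x k k) ^ 2)) := by
        rw [integral_add, integral_const_mul, hnull, mul_zero, add_zero]
        all_goals exact Continuous.integrableOn_Icc (by fun_prop)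
    _ ≤ _ := by
        refine integral_mono (Continuous.integrableOn_Icc (by fun_prop))
          (Continuous.integrableOn_Icc (by fun_prop)) fun x => ?_
        exact sum_sq_add_two_mul_le_sum_sq_symm_sub_trace (jac u x)
end

section
/- Let Ω = (a₁,b₁)×(a₂,b₂)×(a₃,b₃) ⊂ ℝ³ and let u ∈ C²(Ω̄; ℝ³) satisfy u·n = 0 on ∂Ω. Then ∫_Ω (∇u + ∇ᵀu − (2/3)(div u) I) : ∇u dx = ∫_Ω |∇u|² dx + (1/3)∫_Ω (div u)² dx. In particular ‖∇u‖²_{L²(Ω)} ≤ ∫_Ω (∇u + ∇ᵀu − (2/3) div u I) : ∇u dx. -/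
/-!
Write `J = ∇u` and `d = div u`. Pointwise, `(J + Jᵀ - c d I) : J = |J|² + tr (J²) - c d²`, so
everything reduces to `∫ tr (J²) = ∫ d²`. This is the divergence theorem for the field
`F = (u · ∇) u - d u`: its divergence is `tr (J²) - d²`, the third-order terms cancelling by the
symmetry of second derivatives, and `F_i` vanishes on the faces `x_i = a_i, b_i`, where `u_i = 0`
and hence also its tangential derivatives `∂_k u_i`, `k ≠ i`.
-/

open MeasureTheory Set

section

variable {ι : Type*} [Fintype ι]

theorem continuous_fderiv_apply_apply {E : Type*} [NormedAddCommGroup E] [NormedSpace ℝ E]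
    {u : E → ι → ℝ} (hu : ContDiff ℝ 1 u) (v : E) (i : ι) :
    Continuous fun x => fderiv ℝ u x v i :=
  (continuous_apply i).comp ((hu.continuous_fderiv one_ne_zero).clm_apply continuous_const)

theorem hasFDerivAt_fderiv_apply_apply {E : Type*} [NormedAddCommGroup E] [NormedSpace ℝ E]
    {u : E → ι → ℝ} (hu : ContDiff ℝ 2 u) (v : E) (i : ι) (x : E) :
    HasFDerivAt (fun y => fderiv ℝ u y v i)
      ((ContinuousLinearMap.proj i).comp
        ((ContinuousLinearMap.apply ℝ (ι → ℝ) v).comp (fderiv ℝ (fderiv ℝ u) x))) x :=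
  hasFDerivAt_pi'.1 ((ContinuousLinearMap.apply ℝ (ι → ℝ) v).hasFDerivAt.comp x
    ((hu.fderiv_right one_add_one_eq_two.le).differentiable one_ne_zero x).hasFDerivAt) i

variable [DecidableEq ι]

theorem sum_sum_add_transpose_sub_trace_mul (J : ι → ι → ℝ) (c : ℝ) :
    ∑ i, ∑ j, (J i j + J j i - c * (∑ k, J k k) * (if i = j then 1 else 0)) * J i j
      = ∑ i, ∑ j, J i j ^ 2 + ∑ i, ∑ j, J j i * J i j - c * (∑ k, J k k) ^ 2 := by
  simp only [add_mul, sub_mul, mul_assoc, ite_mul, one_mul, zero_mul, Finset.sum_add_distrib,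
    Finset.sum_sub_distrib, Finset.sum_ite_eq, Finset.mem_univ, if_true, ← Finset.mul_sum, sq]

noncomputable def divergence (u : (ι → ℝ) → ι → ℝ) (x : ι → ℝ) : ℝ :=
  ∑ k, fderiv ℝ u x (Pi.single k 1) k

noncomputable def convectionFlux (u : (ι → ℝ) → ι → ℝ) (i : ι) (x : ι → ℝ) : ℝ :=
  ∑ k, u x k * fderiv ℝ u x (Pi.single k 1) i - u x i * divergence u x

section

variable {u : (ι → ℝ) → ι → ℝ}

theorem fderiv_convectionFlux_apply (hu : ContDiff ℝ 2 u) (i : ι) (x w : ι → ℝ) :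
    fderiv ℝ (convectionFlux u i) x w =
      ∑ k, (u x k * fderiv ℝ (fderiv ℝ u) x w (Pi.single k 1) i
          + fderiv ℝ u x (Pi.single k 1) i * fderiv ℝ u x w k)
        - (u x i * ∑ l, fderiv ℝ (fderiv ℝ u) x w (Pi.single l 1) l
          + divergence u x * fderiv ℝ u x w i) := by
  have hcomp := hasFDerivAt_pi'.1 (hu.differentiable two_ne_zero x).hasFDerivAt
  have hflux := (HasFDerivAt.fun_sum (u := Finset.univ) fun k _ =>
      (hcomp k).fun_mul (hasFDerivAt_fderiv_apply_apply hu (Pi.single k 1) i x)).fun_sub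
    ((hcomp i).fun_mul (HasFDerivAt.fun_sum (u := Finset.univ) fun l _ =>
      hasFDerivAt_fderiv_apply_apply hu (Pi.single l 1) l x))
  rw [hflux.fderiv (f := convectionFlux u i)]
  simp only [sub_apply, sum_apply, add_apply, smul_apply, ContinuousLinearMap.comp_apply,
    ContinuousLinearMap.apply_apply, ContinuousLinearMap.proj_apply, smul_eq_mul, divergence]

theorem sum_fderiv_convectionFlux_apply_single (hu : ContDiff ℝ 2 u) (x : ι → ℝ) :
    ∑ i, fderiv ℝ (convectionFlux u i) x (Pi.single i 1)
      = ∑ i, ∑ j, fderiv ℝ u x (Pi.single i 1) j * fderiv ℝ u x (Pi.single j 1) i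
        - divergence u x ^ 2 := by
  have hsymm : IsSymmSndFDerivAt ℝ u x := hu.contDiffAt.isSymmSndFDerivAt (by simp)
  have htransport : ∑ i, ∑ k, u x k * fderiv ℝ (fderiv ℝ u) x (Pi.single i 1) (Pi.single k 1) i
      = ∑ k, u x k * ∑ i, fderiv ℝ (fderiv ℝ u) x (Pi.single k 1) (Pi.single i 1) i := by
    rw [Finset.sum_comm]
    refine Finset.sum_congr rfl fun k _ => ?_
    rw [Finset.mul_sum]
    exact Finset.sum_congr rfl fun i _ => by rw [hsymm]
  simp only [fderiv_convectionFlux_apply hu, Finset.sum_sub_distrib, Finset.sum_add_distrib,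
    htransport, ← Finset.mul_sum, divergence, sq]
  rw [Finset.sum_comm
    (f := fun i j => fderiv ℝ u x (Pi.single j 1) i * fderiv ℝ u x (Pi.single i 1) j)]
  ring

theorem contDiff_convectionFlux (hu : ContDiff ℝ 2 u) (i : ι) :
    ContDiff ℝ 1 (convectionFlux u i) := by
  have hcomp : ∀ k, ContDiff ℝ 1 fun x => u x k := fun k =>
    (contDiff_apply ℝ ℝ k).comp (hu.of_le one_le_two)
  have hjac : ∀ j k, ContDiff ℝ 1 fun x => fderiv ℝ u x (Pi.single k 1) j := fun j k =>
    (contDiff_apply ℝ ℝ j).comp ((hu.fderiv_right one_add_one_eq_two.le).clm_apply contDiff_const)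
  exact (ContDiff.sum fun k _ => (hcomp k).mul (hjac i k)).sub
    ((hcomp i).mul (ContDiff.sum fun k _ => hjac k k))

end

theorem fderiv_single_eq_zero_of_eq_zero_on_face {f : (ι → ℝ) → ℝ} {a b x : ι → ℝ} {i k : ι}
    (hk : a k < b k) (hki : k ≠ i) (hf : DifferentiableAt ℝ f x) (hx : x ∈ Icc a b)
    (hzero : ∀ y ∈ Icc a b, y i = x i → f y = 0) : fderiv ℝ f x (Pi.single k 1) = 0 := by
  have hf' : HasFDerivAt f (fderiv ℝ f x) (Function.update x k (x k)) := by
    rw [Function.update_eq_self]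
    exact hf.hasFDerivAt
  have hline := (hf'.comp_hasDerivAt (x k) (hasDerivAt_update x k (x k))).hasDerivWithinAt
    (s := Icc (a k) (b k))
  have hconst : ∀ t ∈ Icc (a k) (b k), f (Function.update x k t) = 0 := fun t ht =>
    hzero _
      ⟨le_update_iff.2 ⟨ht.1, fun j _ => hx.1 j⟩, update_le_iff.2 ⟨ht.2, fun j _ => hx.2 j⟩⟩
      (Function.update_of_ne hki.symm _ _)
  have hxk : x k ∈ Icc (a k) (b k) := ⟨hx.1 k, hx.2 k⟩
  exact (uniqueDiffOn_Icc hk _ hxk).eq_deriv _ hline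
    ((hasDerivWithinAt_const _ _ 0).congr hconst (hconst _ hxk))

theorem convectionFlux_eq_zero_of_mem_face {u : (ι → ℝ) → ι → ℝ} {a b x : ι → ℝ} {i : ι}
    (hu : Differentiable ℝ u) (hab : ∀ k, a k < b k)
    (hbc : ∀ i, ∀ y ∈ Icc a b, (y i = a i ∨ y i = b i) → u y i = 0)
    (hx : x ∈ Icc a b) (hxi : x i = a i ∨ x i = b i) : convectionFlux u i x = 0 := by
  have hface : ∀ y ∈ Icc a b, y i = x i → u y i = 0 := fun y hy hyi => hbc i y hy (hyi ▸ hxi)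
  have htangent : ∀ k ≠ i, fderiv ℝ u x (Pi.single k 1) i = 0 := fun k hki => by
    have := fderiv_single_eq_zero_of_eq_zero_on_face (f := fun y => u y i) (hab k) hki
      (differentiableAt_pi.1 (hu x) i) hx hface
    rwa [fderiv_apply (hu x) i] at this
  have hui : u x i = 0 := hface x hx rfl
  rw [convectionFlux, hui, zero_mul, sub_zero]
  refine Finset.sum_eq_zero fun k _ => ?_
  rcases eq_or_ne k i with rfl | hki
  · rw [hui, zero_mul]
  · rw [htangent k hki, mul_zero]

end

theorem integral_sum_sum_fderiv_mul_fderiv_eq_integral_divergence_sq {n : ℕ}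
    {u : (Fin (n + 1) → ℝ) → Fin (n + 1) → ℝ} {a b : Fin (n + 1) → ℝ} (hu : ContDiff ℝ 2 u)
    (hab : ∀ i, a i < b i) (hbc : ∀ i, ∀ x ∈ Icc a b, (x i = a i ∨ x i = b i) → u x i = 0) :
    ∫ x in Icc a b, ∑ i, ∑ j, fderiv ℝ u x (Pi.single i 1) j * fderiv ℝ u x (Pi.single j 1) i
      = ∫ x in Icc a b, divergence u x ^ 2 := by
  have hF := contDiff_convectionFlux hu
  have hdiv := integral_divergence_of_hasFDerivAt_off_countable' a b (fun i => (hab i).le)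
    (convectionFlux u) (fun i x => fderiv ℝ (convectionFlux u i) x) ∅ countable_empty
    (fun i => (hF i).continuous.continuousOn)
    (fun x _ i => ((hF i).differentiable one_ne_zero x).hasFDerivAt)
    (continuous_finsetSum _ fun i _ =>
      ((hF i).continuous_fderiv one_ne_zero).clm_apply continuous_const).integrableOn_Icc
  have hfaces : ∀ i (c : ℝ), (c = a i ∨ c = b i) →
      ∫ y in Icc (a ∘ i.succAbove) (b ∘ i.succAbove),
        convectionFlux u i (i.insertNth c y) = 0 := by
    intro i c hc
    refine setIntegral_eq_zero_of_forall_eq_zero fun y hy => ?_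
    refine convectionFlux_eq_zero_of_mem_face (hu.differentiable two_ne_zero) hab hbc
      (Fin.insertNth_mem_Icc.2 ⟨?_, hy⟩) (by simpa using hc)
    rcases hc with rfl | rfl
    exacts [⟨le_rfl, (hab i).le⟩, ⟨(hab i).le, le_rfl⟩]
  simp only [sum_fderiv_convectionFlux_apply_single hu, hfaces _ _ (Or.inl rfl),
    hfaces _ _ (Or.inr rfl), sub_zero, Finset.sum_const_zero] at hdiv
  have hjac := continuous_fderiv_apply_apply (hu.of_le one_le_two)
  rw [← sub_eq_zero, ← integral_sub, hdiv]
  · exact (continuous_finsetSum _ fun i _ => continuous_finsetSum _ fun j _ =>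
      (hjac _ j).mul (hjac _ i)).integrableOn_Icc
  · exact ((continuous_finsetSum _ fun k _ => hjac _ k).pow 2).integrableOn_Icc

theorem integral_sum_sum_add_transpose_sub_divergence_mul {n : ℕ}
    {u : (Fin (n + 1) → ℝ) → Fin (n + 1) → ℝ} {a b : Fin (n + 1) → ℝ} (hu : ContDiff ℝ 2 u)
    (hab : ∀ i, a i < b i) (hbc : ∀ i, ∀ x ∈ Icc a b, (x i = a i ∨ x i = b i) → u x i = 0)
    (c : ℝ) :
    ∫ x in Icc a b, ∑ i, ∑ j, (fderiv ℝ u x (Pi.single j 1) i + fderiv ℝ u x (Pi.single i 1) j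
        - c * divergence u x * (if i = j then 1 else 0)) * fderiv ℝ u x (Pi.single j 1) i
      = (∫ x in Icc a b, ∑ i, ∑ j, fderiv ℝ u x (Pi.single j 1) i ^ 2)
        + (1 - c) * ∫ x in Icc a b, divergence u x ^ 2 := by
  have hjac := continuous_fderiv_apply_apply (hu.of_le one_le_two)
  have hS : IntegrableOn (fun x => ∑ i, ∑ j, fderiv ℝ u x (Pi.single j 1) i ^ 2) (Icc a b) :=
    (continuous_finsetSum _ fun i _ => continuous_finsetSum _ fun j _ =>
      (hjac _ i).pow 2).integrableOn_Icc
  have hC : IntegrableOn (fun x => ∑ i, ∑ j,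
      fderiv ℝ u x (Pi.single i 1) j * fderiv ℝ u x (Pi.single j 1) i) (Icc a b) :=
    (continuous_finsetSum _ fun i _ => continuous_finsetSum _ fun j _ =>
      (hjac _ j).mul (hjac _ i)).integrableOn_Icc
  have hQ : IntegrableOn (fun x => divergence u x ^ 2) (Icc a b) :=
    ((continuous_finsetSum _ fun k _ => hjac _ k).pow 2).integrableOn_Icc
  calc _ = ∫ x in Icc a b, (∑ i, ∑ j, fderiv ℝ u x (Pi.single j 1) i ^ 2
          + ∑ i, ∑ j, fderiv ℝ u x (Pi.single i 1) j * fderiv ℝ u x (Pi.single j 1) i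
          - c * divergence u x ^ 2) :=
        integral_congr_ae (ae_of_all _ fun x => sum_sum_add_transpose_sub_trace_mul _ c)
    _ = _ := by
      rw [integral_sub (hS.fun_add hC) (hQ.const_mul c), integral_add hS hC, integral_const_mul,
        integral_sum_sum_fderiv_mul_fderiv_eq_integral_divergence_sq hu hab hbc]
      ring

theorem stmt2 (a b : Fin 3 → ℝ) (hab : ∀ i, a i < b i)
    (u : (Fin 3 → ℝ) → (Fin 3 → ℝ)) (hu : ContDiff ℝ 2 u)
    (hbc : ∀ i : Fin 3, ∀ x ∈ Set.univ.pi (fun j => Set.Icc (a j) (b j)),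
      (x i = a i ∨ x i = b i) → u x i = 0) :
    (∫ x in Set.univ.pi (fun i => Set.Ioo (a i) (b i)),
        ∑ i : Fin 3, ∑ j : Fin 3,
          (jac u x i j + jac u x j i
            - (2/3) * (∑ k : Fin 3, jac u x k k) * (if i = j then 1 else 0)) * jac u x i j)
      = (∫ x in Set.univ.pi (fun i => Set.Ioo (a i) (b i)),
          ∑ i : Fin 3, ∑ j : Fin 3, (jac u x i j) ^ 2)
        + (1/3) * (∫ x in Set.univ.pi (fun i => Set.Ioo (a i) (b i)),
            (∑ k : Fin 3, jac u x k k) ^ 2)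
    ∧ (∫ x in Set.univ.pi (fun i => Set.Ioo (a i) (b i)),
          ∑ i : Fin 3, ∑ j : Fin 3, (jac u x i j) ^ 2)
      ≤ (∫ x in Set.univ.pi (fun i => Set.Ioo (a i) (b i)),
          ∑ i : Fin 3, ∑ j : Fin 3,
            (jac u x i j + jac u x j i
              - (2/3) * (∑ k : Fin 3, jac u x k k) * (if i = j then 1 else 0)) * jac u x i j) := by
  have hbox : (univ.pi fun i => Ioo (a i) (b i)) =ᵐ[volume] Icc a b :=
    Measure.univ_pi_Ioo_ae_eq_Icc
  rw [Measure.restrict_congr_set hbox]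
  have hbc' : ∀ i, ∀ x ∈ Icc a b, (x i = a i ∨ x i = b i) → u x i = 0 := fun i x hx =>
    hbc i x (by rwa [pi_univ_Icc])
  -- `jac u x i j` and `∑ k, jac u x k k` unfold to the entries and the `divergence` of the lemma.
  have hidentity := integral_sum_sum_add_transpose_sub_divergence_mul hu hab hbc' (2 / 3)
  rw [show (1 : ℝ) - 2 / 3 = 1 / 3 by norm_num] at hidentity
  exact ⟨hidentity, (le_add_of_nonneg_right (by positivity)).trans_eq hidentity.symm⟩
end

section
/- Let Q = (a,b)×(c,d) ⊂ ℝ², Q_ε = εQ for ε > 0, and Ω_ε = Q_ε × (0,1). There exists a constant c > 0 independent of ε such that for every f ∈ W^{1,2}(Ω_ε) with f(·,0) = f(·,1) = 0 on Q_ε, one has ∫₀¹ ∫_{Q_ε} |f(x_h, y) − (f)_{Q_ε}(y)|⁴ dx_h dy ≤ c ‖∇f‖⁴_{L²(Ω_ε)}, where (f)_{Q_ε}(y) = |Q_ε|⁻¹ ∫_{Q_ε} f(x_h, y) dx_h. -/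
/-!
Fix a height `y` and let `w` be the mean-zero part of `f (·, y)` on the rectangle `Q`, with side
lengths `L₁`, `L₂`. Bounding `w x²` by one-dimensional integrals along each coordinate direction
turns `w⁴` into a product of a function of `x₁` and a function of `x₂`; after Fubini and
Cauchy–Schwarz this is Ladyzhenskaya's inequality `∫ w⁴ ≤ (L₂⁻¹ N + 2 √N √E) (L₁⁻¹ N + 2 √N √E)`
with `N = ∫ w²` and `E = ∫ ‖∇w‖²`. The Poincaré inequality `N ≤ (L₁² + L₂²) E` for mean-zero `w`
turns it into `∫ w⁴ ≤ C N E` with `C` depending only on the aspect ratio `L₂ / L₁`, hence not on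
`ε`. Since `f (·, 0) = 0`, the vertical fundamental theorem of calculus gives
`N ≤ ∫_Q f (·, y)² ≤ ‖∇f‖²_{L²(Ω)}`, and integrating the remaining factor `∫_Q ‖∇f (·, y)‖²` over
`y` produces the second `‖∇f‖²`.
-/

open MeasureTheory Set

section MeanInequalities

variable {α : Type*} [MeasurableSpace α] {μ : Measure α}

theorem integral_abs_mul_abs_le_sqrt_mul_sqrt {f g : α → ℝ} (hf : MemLp f 2 μ)
    (hg : MemLp g 2 μ) :
    ∫ a, |f a| * |g a| ∂μ ≤ √(∫ a, f a ^ 2 ∂μ) * √(∫ a, g a ^ 2 ∂μ) := by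
  have h := integral_mul_norm_le_Lp_mul_Lq (p := 2) (q := 2) .two_two
    (by simpa using hf) (by simpa using hg)
  simpa [Real.sqrt_eq_rpow, Real.rpow_two] using h

theorem sq_integral_le_measureReal_mul_integral_sq [IsFiniteMeasure μ] {f : α → ℝ}
    (hf : MemLp f 2 μ) : (∫ a, f a ∂μ) ^ 2 ≤ μ.real univ * ∫ a, f a ^ 2 ∂μ := by
  have h := integral_abs_mul_abs_le_sqrt_mul_sqrt hf (memLp_const (1 : ℝ))
  simp only [abs_one, mul_one, one_pow, integral_const, smul_eq_mul] at h
  calc (∫ a, f a ∂μ) ^ 2 ≤ (∫ a, |f a| ∂μ) ^ 2 := by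
        rw [← sq_abs]; gcongr; exact abs_integral_le_integral_abs
    _ ≤ (√(∫ a, f a ^ 2 ∂μ) * √(μ.real univ)) ^ 2 := by gcongr
    _ = μ.real univ * ∫ a, f a ^ 2 ∂μ := by
        rw [mul_pow, Real.sq_sqrt (integral_nonneg fun _ ↦ sq_nonneg _),
          Real.sq_sqrt measureReal_nonneg, mul_comm]

theorem integral_add_const_sq_of_integral_eq_zero [IsFiniteMeasure μ] {w : α → ℝ}
    (hw : MemLp w 2 μ) (hmean : ∫ a, w a ∂μ = 0) (c : ℝ) :
    ∫ a, (w a + c) ^ 2 ∂μ = ∫ a, w a ^ 2 ∂μ + μ.real univ * c ^ 2 := by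
  have hw1 : Integrable w μ := hw.integrable one_le_two
  have hlin : Integrable (fun a ↦ 2 * c * w a + c ^ 2) μ :=
    (hw1.const_mul _).add (integrable_const _)
  calc ∫ a, (w a + c) ^ 2 ∂μ = ∫ a, (w a ^ 2 + (2 * c * w a + c ^ 2)) ∂μ := by
        congr with a; ring
    _ = ∫ a, w a ^ 2 ∂μ + (2 * c * ∫ a, w a ∂μ + μ.real univ * c ^ 2) := by
        rw [integral_add hw.integrable_sq hlin,
          integral_add (hw1.const_mul _) (integrable_const _), integral_const_mul,
          integral_const, smul_eq_mul]
    _ = ∫ a, w a ^ 2 ∂μ + μ.real univ * c ^ 2 := by rw [hmean]; ring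

/-- For mean-zero `w`, `∫∫ (w x - w z)² = 2 μ(univ) ∫ w²`. -/
theorem two_mul_integral_sq_le_of_sq_sub_le [IsFiniteMeasure μ] {w F G : α → ℝ}
    (hw : MemLp w 2 μ) (hF : Integrable F μ) (hG : Integrable G μ)
    (hmean : ∫ a, w a ∂μ = 0) (h : ∀ᵐ x ∂μ, ∀ᵐ z ∂μ, (w x - w z) ^ 2 ≤ F x + G z) :
    2 * ∫ a, w a ^ 2 ∂μ ≤ ∫ a, F a ∂μ + ∫ a, G a ∂μ := by
  set m := μ.real univ
  set N := ∫ a, w a ^ 2 ∂μ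
  rcases (measureReal_nonneg : 0 ≤ m).eq_or_lt with hm | hm
  · simp [Measure.measure_univ_eq_zero.mp ((measureReal_eq_zero_iff).mp hm.symm), N]
  have hpt : ∀ᵐ x ∂μ, N + m * w x ^ 2 ≤ m * F x + ∫ a, G a ∂μ := by
    filter_upwards [h] with x hx
    calc N + m * w x ^ 2 = ∫ z, (w z + -w x) ^ 2 ∂μ := by
          rw [integral_add_const_sq_of_integral_eq_zero hw hmean, neg_sq]
      _ ≤ ∫ z, (F x + G z) ∂μ := by
          refine integral_mono_ae (hw.add (memLp_const _)).integrable_sq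
            ((integrable_const _).add hG) ?_
          filter_upwards [hx] with z hz
          rwa [← sub_eq_add_neg, ← neg_sub, neg_sq]
      _ = m * F x + ∫ a, G a ∂μ := by
          rw [integral_add (integrable_const _) hG, integral_const, smul_eq_mul]
  have hint : ∫ x, (N + m * w x ^ 2) ∂μ ≤ ∫ x, (m * F x + ∫ a, G a ∂μ) ∂μ :=
    integral_mono_ae ((integrable_const _).add (hw.integrable_sq.const_mul _))
      ((hF.const_mul _).add (integrable_const _)) hpt
  rw [integral_add (integrable_const _) (hw.integrable_sq.const_mul _),
    integral_add (hF.const_mul _) (integrable_const _), integral_const_mul,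
    integral_const_mul, integral_const, integral_const, smul_eq_mul, smul_eq_mul] at hint
  nlinarith

end MeanInequalities

section Bounded

variable {X : Type*} [MetricSpace X] [ProperSpace X] [MeasurableSpace X]
  [OpensMeasurableSpace X] {μ : Measure X} [IsFiniteMeasureOnCompacts μ] {s : Set X}

theorem Continuous.integrableOn_of_isBounded {E : Type*} [NormedAddCommGroup E] {f : X → E}
    (hf : Continuous f) (hs : Bornology.IsBounded s) : IntegrableOn f s μ :=
  (hf.continuousOn.integrableOn_compact hs.isCompact_closure).mono_set subset_closure

theorem Continuous.memLp_two_of_isBounded {f : X → ℝ} (hf : Continuous f)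
    (hs : Bornology.IsBounded s) : MemLp f 2 (μ.restrict s) :=
  (memLp_two_iff_integrable_sq hf.aestronglyMeasurable).2
    ((hf.pow 2).integrableOn_of_isBounded hs)

end Bounded

section Interval

variable {a b : ℝ} {u v : ℝ → ℝ}

theorem abs_sub_le_setIntegral_of_norm_deriv_le (hu : ContDiff ℝ 1 u) (hv : Continuous v)
    (huv : ∀ t, ‖deriv u t‖ ≤ v t) {x s : ℝ} (hx : x ∈ Icc a b) (hs : s ∈ Icc a b) :
    |u x - u s| ≤ ∫ t in Ioo a b, v t := by
  have hu' : Continuous (deriv u) := hu.continuous_deriv le_rfl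
  have hsub : uIoc s x ⊆ Ioc a b := Ioc_subset_Ioc (le_min hs.1 hx.1) (max_le hs.2 hx.2)
  have hvint : IntegrableOn v (Ioc a b) := hv.integrableOn_of_isBounded (Metric.isBounded_Ioc a b)
  rw [← intervalIntegral.integral_deriv_eq_sub (fun t _ ↦ hu.differentiable one_ne_zero t)
    (hu'.intervalIntegrable s x), ← integral_Ioc_eq_integral_Ioo, ← Real.norm_eq_abs]
  calc ‖∫ t in s..x, deriv u t‖ ≤ ∫ t in uIoc s x, ‖deriv u t‖ :=
        intervalIntegral.norm_integral_le_integral_norm_uIoc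
    _ ≤ ∫ t in uIoc s x, v t :=
        setIntegral_mono_on
          ((hu'.norm.integrableOn_of_isBounded (Metric.isBounded_Ioc a b)).mono_set hsub)
          (hvint.mono_set hsub) measurableSet_uIoc fun t _ ↦ huv t
    _ ≤ ∫ t in Ioc a b, v t :=
        setIntegral_mono_set hvint
          (.of_forall fun t ↦ (norm_nonneg _).trans (huv t)) hsub.eventuallyLE

theorem sq_setIntegral_le_mul_setIntegral_sq (hv : Continuous v) (hab : a ≤ b) :
    (∫ t in Ioo a b, v t) ^ 2 ≤ (b - a) * ∫ t in Ioo a b, v t ^ 2 := by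
  simpa [Real.volume_real_Ioo_of_le hab] using
    sq_integral_le_measureReal_mul_integral_sq (μ := volume.restrict (Ioo a b))
      (hv.memLp_two_of_isBounded (Metric.isBounded_Ioo a b))

theorem sq_le_setIntegral_of_norm_deriv_le (hab : a < b) (hu : ContDiff ℝ 1 u)
    (hv : Continuous v) (huv : ∀ t, ‖deriv u t‖ ≤ v t) {x : ℝ} (hx : x ∈ Icc a b) :
    u x ^ 2 ≤ ∫ t in Ioo a b, ((b - a)⁻¹ * u t ^ 2 + 2 * (|u t| * v t)) := by
  have hba : 0 < b - a := sub_pos.2 hab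
  have hu0 := hu.continuous
  set K := ∫ t in Ioo a b, 2 * (|u t| * v t) with hK
  have hu2 : ∀ t, ‖deriv (fun t ↦ u t ^ 2) t‖ ≤ 2 * (|u t| * v t) := fun t ↦ by
    rw [((hu.differentiable one_ne_zero t).hasDerivAt.fun_pow 2).deriv]
    simpa [abs_mul, mul_assoc] using
      mul_le_mul_of_nonneg_left (huv t) (by positivity : 0 ≤ 2 * |u t|)
  have hpt : ∀ s ∈ Ioo a b, u x ^ 2 ≤ u s ^ 2 + K := fun s hs ↦ by
    have := abs_sub_le_setIntegral_of_norm_deriv_le (hu.pow 2)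
      (by fun_prop : Continuous fun t ↦ 2 * (|u t| * v t)) hu2 hx (Ioo_subset_Icc_self hs)
    linarith [le_abs_self (u x ^ 2 - u s ^ 2)]
  have hu2int : IntegrableOn (fun t ↦ u t ^ 2) (Ioo a b) :=
    (hu0.pow 2).integrableOn_of_isBounded (Metric.isBounded_Ioo a b)
  have hint : (b - a) * u x ^ 2 ≤ (∫ t in Ioo a b, u t ^ 2) + (b - a) * K := by
    have hrhs : IntegrableOn (fun s ↦ u s ^ 2 + K) (Ioo a b) :=
      hu2int.add (integrableOn_const (by simp))
    have := setIntegral_mono_on (integrableOn_const (by simp)) hrhs measurableSet_Ioo hpt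
    rwa [integral_add hu2int (integrableOn_const (μ := volume) (by simp)), setIntegral_const,
      setIntegral_const, Real.volume_real_Ioo_of_le hab.le, smul_eq_mul, smul_eq_mul] at this
  rw [integral_add (hu2int.const_mul _)
    ((by fun_prop : Continuous fun t ↦ 2 * (|u t| * v t)).integrableOn_of_isBounded
      (Metric.isBounded_Ioo a b)), integral_const_mul, inv_mul_eq_div, ← sub_le_iff_le_add,
    le_div_iff₀ hba, ← hK]
  linarith

end Interval

section Slices

variable {E F : Type*} [NormedAddCommGroup E] [NormedSpace ℝ E] [NormedAddCommGroup F]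
  [NormedSpace ℝ F] {f : E × F → ℝ}

theorem norm_fderiv_comp_prodMk_left_le {x : E} {y : F} (hf : DifferentiableAt ℝ f (x, y)) :
    ‖fderiv ℝ (fun e ↦ f (e, y)) x‖ ≤ ‖fderiv ℝ f (x, y)‖ := by
  have h : HasFDerivAt (fun e ↦ f (e, y)) _ x :=
    hf.hasFDerivAt.comp x (hasFDerivAt_prodMk_left x y)
  rw [h.fderiv]
  grw [ContinuousLinearMap.opNorm_comp_le, ContinuousLinearMap.norm_inl_le_one, mul_one]

theorem norm_fderiv_comp_prodMk_right_le {x : E} {y : F} (hf : DifferentiableAt ℝ f (x, y)) :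
    ‖fderiv ℝ (fun e ↦ f (x, e)) y‖ ≤ ‖fderiv ℝ f (x, y)‖ := by
  have h : HasFDerivAt (fun e ↦ f (x, e)) _ y :=
    hf.hasFDerivAt.comp y (hasFDerivAt_prodMk_right x y)
  rw [h.fderiv]
  grw [ContinuousLinearMap.opNorm_comp_le, ContinuousLinearMap.norm_inr_le_one, mul_one]

theorem norm_deriv_comp_prodMk_left_le {f : ℝ × F → ℝ} {t : ℝ} {y : F}
    (hf : DifferentiableAt ℝ f (t, y)) : ‖deriv (fun s ↦ f (s, y)) t‖ ≤ ‖fderiv ℝ f (t, y)‖ :=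
  norm_deriv_eq_norm_fderiv.trans_le (norm_fderiv_comp_prodMk_left_le hf)

theorem norm_deriv_comp_prodMk_right_le {f : E × ℝ → ℝ} {x : E} {t : ℝ}
    (hf : DifferentiableAt ℝ f (x, t)) : ‖deriv (fun s ↦ f (x, s)) t‖ ≤ ‖fderiv ℝ f (x, t)‖ :=
  norm_deriv_eq_norm_fderiv.trans_le (norm_fderiv_comp_prodMk_right_le hf)

end Slices

section Fubini

variable {α β : Type*} [MeasurableSpace α] [MeasurableSpace β] {μ : Measure α} {ν : Measure β}
  [SFinite μ] [SFinite ν] {s : Set α} {t : Set β} {f : α × β → ℝ}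

theorem setIntegral_prod_symm (hf : IntegrableOn f (s ×ˢ t) (μ.prod ν)) :
    ∫ z in s ×ˢ t, f z ∂μ.prod ν = ∫ y in t, ∫ x in s, f (x, y) ∂μ ∂ν := by
  rw [IntegrableOn, ← Measure.prod_restrict] at hf
  rw [← Measure.prod_restrict, integral_prod_symm f hf]

theorem MeasureTheory.IntegrableOn.setIntegral_prod_left
    (hf : IntegrableOn f (s ×ˢ t) (μ.prod ν)) :
    IntegrableOn (fun x ↦ ∫ y in t, f (x, y) ∂ν) s μ := by
  rw [IntegrableOn, ← Measure.prod_restrict] at hf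
  exact hf.integral_prod_left

theorem MeasureTheory.IntegrableOn.setIntegral_prod_right
    (hf : IntegrableOn f (s ×ˢ t) (μ.prod ν)) :
    IntegrableOn (fun y ↦ ∫ x in s, f (x, y) ∂μ) t ν := by
  rw [IntegrableOn, ← Measure.prod_restrict] at hf
  exact hf.integral_prod_right

theorem setIntegral_prod_sq_le_of_le_fst_of_le_snd {φ : α × β → ℝ} {G : α → ℝ} {F : β → ℝ}
    (hs : MeasurableSet s) (ht : MeasurableSet t) (hG : IntegrableOn G s μ)
    (hF : IntegrableOn F t ν) (hφ : ∀ z ∈ s ×ˢ t, 0 ≤ φ z)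
    (hφG : ∀ z ∈ s ×ˢ t, φ z ≤ G z.1) (hφF : ∀ z ∈ s ×ˢ t, φ z ≤ F z.2) :
    ∫ z in s ×ˢ t, φ z ^ 2 ∂μ.prod ν ≤ (∫ x in s, G x ∂μ) * ∫ y in t, F y ∂ν := by
  rw [← setIntegral_prod_mul]
  refine integral_mono_of_nonneg (.of_forall fun _ ↦ sq_nonneg _) ?_
    (ae_restrict_of_forall_mem (hs.prod ht) fun z hz ↦ ?_)
  · rw [← Measure.prod_restrict]
    exact hG.mul_prod hF
  · dsimp only
    rw [sq]
    exact mul_le_mul (hφG z hz) (hφF z hz) (hφ z hz) ((hφ z hz).trans (hφG z hz))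

end Fubini

section Rectangle

variable {a b c d : ℝ} {w g : ℝ × ℝ → ℝ}

theorem isBounded_Ioo_prod_Ioo : Bornology.IsBounded (Ioo a b ×ˢ Ioo c d) :=
  (Metric.isBounded_Ioo a b).prod (Metric.isBounded_Ioo c d)

theorem setIntegral_Ioo_prod_Ioo_pow_four_le (hab : a < b) (hcd : c < d) (hw : ContDiff ℝ 1 w) :
    ∫ x in Ioo a b ×ˢ Ioo c d, w x ^ 4 ≤
      ((d - c)⁻¹ * (∫ x in Ioo a b ×ˢ Ioo c d, w x ^ 2) +
          2 * √(∫ x in Ioo a b ×ˢ Ioo c d, w x ^ 2) *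
            √(∫ x in Ioo a b ×ˢ Ioo c d, ‖fderiv ℝ w x‖ ^ 2)) *
        ((b - a)⁻¹ * (∫ x in Ioo a b ×ˢ Ioo c d, w x ^ 2) +
          2 * √(∫ x in Ioo a b ×ˢ Ioo c d, w x ^ 2) *
            √(∫ x in Ioo a b ×ˢ Ioo c d, ‖fderiv ℝ w x‖ ^ 2)) := by
  set Q := Ioo a b ×ˢ Ioo c d with hQdef
  have hQ : Bornology.IsBounded Q := isBounded_Ioo_prod_Ioo
  have hw0 := hw.continuous
  have hDw : Continuous fun x ↦ ‖fderiv ℝ w x‖ := (hw.continuous_fderiv one_ne_zero).norm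
  set Φ : ℝ → ℝ × ℝ → ℝ := fun L x ↦ L⁻¹ * w x ^ 2 + 2 * (|w x| * ‖fderiv ℝ w x‖)
  have hΦint : ∀ L, IntegrableOn (Φ L) Q (volume.prod volume) := fun L ↦
    (by fun_prop : Continuous (Φ L)).integrableOn_of_isBounded hQ
  have hΦ : ∀ L, ∫ x in Q, Φ L x ≤
      L⁻¹ * (∫ x in Q, w x ^ 2) + 2 * √(∫ x in Q, w x ^ 2) * √(∫ x in Q, ‖fderiv ℝ w x‖ ^ 2) := by
    intro L
    have hcs := integral_abs_mul_abs_le_sqrt_mul_sqrt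
      (hw0.memLp_two_of_isBounded (μ := volume) hQ) (hDw.memLp_two_of_isBounded hQ)
    simp only [abs_norm] at hcs
    simp only [Φ]
    rw [integral_add ((by fun_prop : Continuous fun x ↦ w x ^ 2).integrableOn_of_isBounded hQ
      |>.const_mul L⁻¹)
      ((by fun_prop : Continuous fun x ↦ |w x| * ‖fderiv ℝ w x‖).integrableOn_of_isBounded
        hQ |>.const_mul 2), integral_const_mul, integral_const_mul]
    linarith
  have hΦ0 : ∀ L, 0 ≤ L → 0 ≤ ∫ x in Q, Φ L x := fun L hL ↦
    setIntegral_nonneg (measurableSet_Ioo.prod measurableSet_Ioo) fun x _ ↦ by positivity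
  have hslices : ∫ x in Q, (w x ^ 2) ^ 2 ≤
      (∫ x in Q, Φ (d - c) x) * ∫ x in Q, Φ (b - a) x := by
    rw [hQdef, Measure.volume_eq_prod, setIntegral_prod _ (hΦint _),
      setIntegral_prod_symm (hΦint _)]
    refine setIntegral_prod_sq_le_of_le_fst_of_le_snd measurableSet_Ioo measurableSet_Ioo
      (hΦint _).setIntegral_prod_left (hΦint _).setIntegral_prod_right
      (fun _ _ ↦ sq_nonneg _) (fun x hx ↦ ?_) (fun x hx ↦ ?_)
    · exact sq_le_setIntegral_of_norm_deriv_le hcd (hw.comp (contDiff_const.prodMk contDiff_id))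
        (hDw.comp (continuous_const.prodMk continuous_id))
        (fun t ↦ norm_deriv_comp_prodMk_right_le (hw.differentiable one_ne_zero _))
        (Ioo_subset_Icc_self hx.2)
    · exact sq_le_setIntegral_of_norm_deriv_le hab (hw.comp (contDiff_id.prodMk contDiff_const))
        (hDw.comp (continuous_id.prodMk continuous_const))
        (fun t ↦ norm_deriv_comp_prodMk_left_le (hw.differentiable one_ne_zero _))
        (Ioo_subset_Icc_self hx.1)
  simp only [← pow_mul] at hslices
  exact hslices.trans (mul_le_mul (hΦ _) (hΦ _) (hΦ0 _ (sub_pos.2 hab).le)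
    ((hΦ0 _ (sub_pos.2 hcd).le).trans (hΦ _)))

theorem setIntegral_Ioo_prod_comp_snd (hab : a ≤ b) (t : Set ℝ) (h : ℝ → ℝ) :
    ∫ x in Ioo a b ×ˢ t, h x.2 = (b - a) * ∫ y in t, h y := by
  rw [Measure.volume_eq_prod, ← Measure.prod_restrict, integral_fun_snd,
    measureReal_restrict_apply_univ, Real.volume_real_Ioo_of_le hab, smul_eq_mul]

theorem setIntegral_prod_Ioo_comp_fst (hcd : c ≤ d) (s : Set ℝ) (h : ℝ → ℝ) :
    ∫ x in s ×ˢ Ioo c d, h x.1 = (d - c) * ∫ x in s, h x := by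
  rw [Measure.volume_eq_prod, ← Measure.prod_restrict, integral_fun_fst,
    measureReal_restrict_apply_univ, Real.volume_real_Ioo_of_le hcd, smul_eq_mul]

/-- Compare `w x` and `w z` along the path `x → (z.1, x.2) → z`. -/
theorem sq_sub_le_of_mem_Ioo_prod_Ioo (hab : a ≤ b) (hcd : c ≤ d) (hw : ContDiff ℝ 1 w)
    {x z : ℝ × ℝ} (hx : x ∈ Ioo a b ×ˢ Ioo c d) (hz : z ∈ Ioo a b ×ˢ Ioo c d) :
    (w x - w z) ^ 2 ≤ 2 * (b - a) * (∫ t in Ioo a b, ‖fderiv ℝ w (t, x.2)‖ ^ 2) +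
      2 * (d - c) * ∫ t in Ioo c d, ‖fderiv ℝ w (z.1, t)‖ ^ 2 := by
  have hDw : Continuous fun x ↦ ‖fderiv ℝ w x‖ := (hw.continuous_fderiv one_ne_zero).norm
  set A := ∫ t in Ioo a b, ‖fderiv ℝ w (t, x.2)‖
  set B := ∫ t in Ioo c d, ‖fderiv ℝ w (z.1, t)‖
  have hA : |w x - w (z.1, x.2)| ≤ A :=
    abs_sub_le_setIntegral_of_norm_deriv_le (u := fun s ↦ w (s, x.2))
      (hw.comp (contDiff_id.prodMk contDiff_const))
      (hDw.comp (continuous_id.prodMk continuous_const))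
      (fun t ↦ norm_deriv_comp_prodMk_left_le (hw.differentiable one_ne_zero _))
      (Ioo_subset_Icc_self hx.1) (Ioo_subset_Icc_self hz.1)
  have hB : |w (z.1, x.2) - w z| ≤ B :=
    abs_sub_le_setIntegral_of_norm_deriv_le (u := fun s ↦ w (z.1, s))
      (hw.comp (contDiff_const.prodMk contDiff_id))
      (hDw.comp (continuous_const.prodMk continuous_id))
      (fun t ↦ norm_deriv_comp_prodMk_right_le (hw.differentiable one_ne_zero _))
      (Ioo_subset_Icc_self hx.2) (Ioo_subset_Icc_self hz.2)
  have hA2 : A ^ 2 ≤ (b - a) * ∫ t in Ioo a b, ‖fderiv ℝ w (t, x.2)‖ ^ 2 :=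
    sq_setIntegral_le_mul_setIntegral_sq (hDw.comp (continuous_id.prodMk continuous_const)) hab
  have hB2 : B ^ 2 ≤ (d - c) * ∫ t in Ioo c d, ‖fderiv ℝ w (z.1, t)‖ ^ 2 :=
    sq_setIntegral_le_mul_setIntegral_sq (hDw.comp (continuous_const.prodMk continuous_id)) hcd
  have hAB : |w x - w z| ≤ A + B := (abs_sub_le _ _ _).trans (add_le_add hA hB)
  calc (w x - w z) ^ 2 ≤ (A + B) ^ 2 := by
        rw [← sq_abs]; exact pow_le_pow_left₀ (abs_nonneg _) hAB 2
    _ ≤ 2 * A ^ 2 + 2 * B ^ 2 := by nlinarith [sq_nonneg (A - B)]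
    _ ≤ _ := by linarith

theorem setIntegral_Ioo_prod_Ioo_sq_le_of_setIntegral_eq_zero (hab : a ≤ b) (hcd : c ≤ d)
    (hw : ContDiff ℝ 1 w) (hmean : ∫ x in Ioo a b ×ˢ Ioo c d, w x = 0) :
    ∫ x in Ioo a b ×ˢ Ioo c d, w x ^ 2 ≤
      ((b - a) ^ 2 + (d - c) ^ 2) * ∫ x in Ioo a b ×ˢ Ioo c d, ‖fderiv ℝ w x‖ ^ 2 := by
  set Q := Ioo a b ×ˢ Ioo c d with hQdef
  have hQ : Bornology.IsBounded Q := isBounded_Ioo_prod_Ioo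
  have hQm : MeasurableSet Q := measurableSet_Ioo.prod measurableSet_Ioo
  have : IsFiniteMeasure (volume.restrict Q) := isFiniteMeasure_restrict.2 hQ.measure_lt_top.ne
  have hDw2 : IntegrableOn (fun x ↦ ‖fderiv ℝ w x‖ ^ 2) Q (volume.prod volume) :=
    ((hw.continuous_fderiv one_ne_zero).norm.pow 2).integrableOn_of_isBounded hQ
  set P₁ : ℝ → ℝ := fun y ↦ ∫ t in Ioo a b, ‖fderiv ℝ w (t, y)‖ ^ 2
  set P₂ : ℝ → ℝ := fun x ↦ ∫ t in Ioo c d, ‖fderiv ℝ w (x, t)‖ ^ 2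
  have hP₁ : IntegrableOn (fun x : ℝ × ℝ ↦ 2 * (b - a) * P₁ x.2) Q := by
    rw [IntegrableOn, Measure.volume_eq_prod, hQdef, ← Measure.prod_restrict]
    exact (hDw2.setIntegral_prod_right.const_mul _).comp_snd _
  have hP₂ : IntegrableOn (fun z : ℝ × ℝ ↦ 2 * (d - c) * P₂ z.1) Q := by
    rw [IntegrableOn, Measure.volume_eq_prod, hQdef, ← Measure.prod_restrict]
    exact (hDw2.setIntegral_prod_left.const_mul _).comp_fst _
  have h := two_mul_integral_sq_le_of_sq_sub_le (hw.continuous.memLp_two_of_isBounded hQ)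
    hP₁ hP₂ hmean (ae_restrict_of_forall_mem hQm fun x hx ↦
      ae_restrict_of_forall_mem hQm fun z hz ↦ sq_sub_le_of_mem_Ioo_prod_Ioo hab hcd hw hx hz)
  rw [setIntegral_Ioo_prod_comp_snd hab _ (fun y ↦ 2 * (b - a) * P₁ y),
    setIntegral_prod_Ioo_comp_fst hcd _ (fun x ↦ 2 * (d - c) * P₂ x), integral_const_mul,
    integral_const_mul, ← setIntegral_prod_symm hDw2, ← setIntegral_prod _ hDw2,
    ← Measure.volume_eq_prod, ← hQdef] at h
  linarith

noncomputable def rectangleConst (a b c d : ℝ) : ℝ :=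
  (3 + (d - c) / (b - a)) * (3 + (b - a) / (d - c))

theorem rectangleConst_pos (hab : a < b) (hcd : c < d) : 0 < rectangleConst a b c d := by
  have := div_pos (sub_pos.2 hcd) (sub_pos.2 hab)
  have := div_pos (sub_pos.2 hab) (sub_pos.2 hcd)
  unfold rectangleConst
  positivity

theorem rectangleConst_mul_left {ε : ℝ} (hε : ε ≠ 0) :
    rectangleConst (ε * a) (ε * b) (ε * c) (ε * d) = rectangleConst a b c d := by
  simp only [rectangleConst, ← mul_sub, mul_div_mul_left _ _ hε]

theorem setIntegral_Ioo_prod_Ioo_pow_four_le_of_setIntegral_eq_zero (hab : a < b) (hcd : c < d)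
    (hw : ContDiff ℝ 1 w) (hmean : ∫ x in Ioo a b ×ˢ Ioo c d, w x = 0) :
    ∫ x in Ioo a b ×ˢ Ioo c d, w x ^ 4 ≤
      rectangleConst a b c d *
        (∫ x in Ioo a b ×ˢ Ioo c d, w x ^ 2) * ∫ x in Ioo a b ×ˢ Ioo c d, ‖fderiv ℝ w x‖ ^ 2 := by
  have hQm : MeasurableSet (Ioo a b ×ˢ Ioo c d) := measurableSet_Ioo.prod measurableSet_Ioo
  set N := ∫ x in Ioo a b ×ˢ Ioo c d, w x ^ 2
  set E := ∫ x in Ioo a b ×ˢ Ioo c d, ‖fderiv ℝ w x‖ ^ 2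
  have hN : 0 ≤ N := setIntegral_nonneg hQm fun _ _ ↦ sq_nonneg _
  have hE : 0 ≤ E := setIntegral_nonneg hQm fun _ _ ↦ sq_nonneg _
  have hL₁ : 0 < b - a := sub_pos.2 hab
  have hL₂ : 0 < d - c := sub_pos.2 hcd
  set M := (b - a) + (d - c)
  have hsqrt : √N ≤ M * √E := by
    have hP := setIntegral_Ioo_prod_Ioo_sq_le_of_setIntegral_eq_zero hab.le hcd.le hw hmean
    rw [Real.sqrt_le_left (by positivity), mul_pow, Real.sq_sqrt hE]
    nlinarith [mul_nonneg (mul_nonneg hL₁.le hL₂.le) hE]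
  have hbracket : ∀ L, 0 < L → L⁻¹ * N + 2 * √N * √E ≤ (M / L + 2) * (√N * √E) := by
    intro L hL
    have h := mul_le_mul_of_nonneg_left hsqrt (Real.sqrt_nonneg N)
    rw [Real.mul_self_sqrt hN] at h
    calc L⁻¹ * N + 2 * √N * √E ≤ L⁻¹ * (√N * (M * √E)) + 2 * √N * √E := by gcongr
      _ = (M / L + 2) * (√N * √E) := by ring
  calc ∫ x in Ioo a b ×ˢ Ioo c d, w x ^ 4
      ≤ ((d - c)⁻¹ * N + 2 * √N * √E) * ((b - a)⁻¹ * N + 2 * √N * √E) :=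
        setIntegral_Ioo_prod_Ioo_pow_four_le hab hcd hw
    _ ≤ ((M / (d - c) + 2) * (√N * √E)) * ((M / (b - a) + 2) * (√N * √E)) :=
        mul_le_mul (hbracket _ hL₂) (hbracket _ hL₁) (by positivity) (by positivity)
    _ = (M / (d - c) + 2) * (M / (b - a) + 2) * (√N * √N) * (√E * √E) := by ring
    _ = _ := by
        rw [Real.mul_self_sqrt hN, Real.mul_self_sqrt hE, rectangleConst]
        field_simp
        ring

theorem setIntegral_Ioo_prod_Ioo_abs_sub_setAverage_pow_four_le (hab : a < b) (hcd : c < d)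
    (hg : ContDiff ℝ 1 g) :
    ∫ x in Ioo a b ×ˢ Ioo c d, |g x - ⨍ z in Ioo a b ×ˢ Ioo c d, g z| ^ 4 ≤
      rectangleConst a b c d *
        (∫ x in Ioo a b ×ˢ Ioo c d, g x ^ 2) * ∫ x in Ioo a b ×ˢ Ioo c d, ‖fderiv ℝ g x‖ ^ 2 := by
  set Q := Ioo a b ×ˢ Ioo c d
  have hQ : Bornology.IsBounded Q := isBounded_Ioo_prod_Ioo
  have : IsFiniteMeasure (volume.restrict Q) := isFiniteMeasure_restrict.2 hQ.measure_lt_top.ne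
  set m := ⨍ z in Q, g z
  have hw : ContDiff ℝ 1 fun x ↦ g x - m := hg.sub contDiff_const
  have hmean : ∫ x in Q, (g x - m) = 0 := integral_sub_average _ _
  have hvar : ∫ x in Q, (g x - m) ^ 2 ≤ ∫ x in Q, g x ^ 2 := by
    have h := integral_add_const_sq_of_integral_eq_zero
      (hw.continuous.memLp_two_of_isBounded hQ) hmean m
    simp only [sub_add_cancel] at h
    rw [h]
    exact le_add_of_nonneg_right (mul_nonneg measureReal_nonneg (sq_nonneg m))
  have hK := (rectangleConst_pos hab hcd).le
  calc ∫ x in Q, |g x - m| ^ 4 = ∫ x in Q, (g x - m) ^ 4 := by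
        simp only [Even.pow_abs (by decide : Even 4)]
    _ ≤ _ := setIntegral_Ioo_prod_Ioo_pow_four_le_of_setIntegral_eq_zero hab hcd hw hmean
    _ ≤ _ := by
        simp only [fderiv_sub_const]
        gcongr

end Rectangle

section Vertical

variable {E : Type*} [NormedAddCommGroup E] [NormedSpace ℝ E] [MeasurableSpace E] [BorelSpace E]
  [ProperSpace E] {μ : Measure E} [IsFiniteMeasureOnCompacts μ] [SFinite μ]

theorem setIntegral_sq_le_mul_setIntegral_prod_Ioo_of_eq_zero {f : E × ℝ → ℝ} {s : Set E}
    {a b y : ℝ} (hf : ContDiff ℝ 1 f) (hs : MeasurableSet s) (hsb : Bornology.IsBounded s)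
    (hzero : ∀ x ∈ s, f (x, a) = 0) (hy : y ∈ Icc a b) :
    ∫ x in s, f (x, y) ^ 2 ∂μ ≤
      (b - a) * ∫ z in s ×ˢ Ioo a b, ‖fderiv ℝ f z‖ ^ 2 ∂μ.prod volume := by
  have hab : a ≤ b := hy.1.trans hy.2
  have hDf : Continuous fun z ↦ ‖fderiv ℝ f z‖ := (hf.continuous_fderiv one_ne_zero).norm
  have hDf2 : IntegrableOn (fun z ↦ ‖fderiv ℝ f z‖ ^ 2) (s ×ˢ Ioo a b) (μ.prod volume) :=
    (hDf.pow 2).integrableOn_of_isBounded (hsb.prod (Metric.isBounded_Ioo a b))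
  have hpt : ∀ x ∈ s, f (x, y) ^ 2 ≤ (b - a) * ∫ t in Ioo a b, ‖fderiv ℝ f (x, t)‖ ^ 2 := by
    intro x hx
    have hDfx : Continuous fun t ↦ ‖fderiv ℝ f (x, t)‖ :=
      hDf.comp (continuous_const.prodMk continuous_id)
    have h := abs_sub_le_setIntegral_of_norm_deriv_le (u := fun t ↦ f (x, t))
      (hf.comp (contDiff_const.prodMk contDiff_id)) hDfx
      (fun t ↦ norm_deriv_comp_prodMk_right_le (hf.differentiable one_ne_zero _)) hy
      (left_mem_Icc.2 hab)
    rw [hzero x hx, sub_zero] at h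
    calc f (x, y) ^ 2 = |f (x, y)| ^ 2 := (sq_abs _).symm
      _ ≤ (∫ t in Ioo a b, ‖fderiv ℝ f (x, t)‖) ^ 2 := by gcongr
      _ ≤ _ := sq_setIntegral_le_mul_setIntegral_sq hDfx hab
  calc ∫ x in s, f (x, y) ^ 2 ∂μ
      ≤ ∫ x in s, (b - a) * (∫ t in Ioo a b, ‖fderiv ℝ f (x, t)‖ ^ 2) ∂μ :=
        setIntegral_mono_on ((hf.continuous.comp (continuous_id.prodMk continuous_const)).pow 2
          |>.integrableOn_of_isBounded hsb) (hDf2.setIntegral_prod_left.const_mul _) hs hpt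
    _ = _ := by rw [integral_const_mul, setIntegral_prod _ hDf2]

end Vertical

section ThinDomain

variable {a b c d : ℝ} {f : (ℝ × ℝ) × ℝ → ℝ}

theorem setIntegral_abs_sub_setAverage_slice_pow_four_le (hab : a < b) (hcd : c < d)
    (hf : ContDiff ℝ 1 f) (hzero : ∀ x ∈ Ioo a b ×ˢ Ioo c d, f (x, 0) = 0) {y : ℝ}
    (hy : y ∈ Icc (0 : ℝ) 1) :
    ∫ x in Ioo a b ×ˢ Ioo c d, |f (x, y) - ⨍ z in Ioo a b ×ˢ Ioo c d, f (z, y)| ^ 4 ≤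
      rectangleConst a b c d *
        (∫ z in (Ioo a b ×ˢ Ioo c d) ×ˢ Ioo (0 : ℝ) 1, ‖fderiv ℝ f z‖ ^ 2) *
          ∫ x in Ioo a b ×ˢ Ioo c d, ‖fderiv ℝ f (x, y)‖ ^ 2 := by
  have hQ : Bornology.IsBounded (Ioo a b ×ˢ Ioo c d) := isBounded_Ioo_prod_Ioo
  have hQm : MeasurableSet (Ioo a b ×ˢ Ioo c d) := measurableSet_Ioo.prod measurableSet_Ioo
  have hfy : ContDiff ℝ 1 fun x ↦ f (x, y) := hf.comp (contDiff_id.prodMk contDiff_const)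
  have hK := (rectangleConst_pos hab hcd).le
  have hvertical := setIntegral_sq_le_mul_setIntegral_prod_Ioo_of_eq_zero (μ := volume) hf hQm hQ
    hzero hy
  rw [sub_zero, one_mul] at hvertical
  have hhorizontal : ∫ x in Ioo a b ×ˢ Ioo c d, ‖fderiv ℝ (fun x ↦ f (x, y)) x‖ ^ 2 ≤
      ∫ x in Ioo a b ×ˢ Ioo c d, ‖fderiv ℝ f (x, y)‖ ^ 2 := by
    refine setIntegral_mono_on ?_ ?_ hQm fun x _ ↦ pow_le_pow_left₀ (norm_nonneg _)
      (norm_fderiv_comp_prodMk_left_le (hf.differentiable one_ne_zero _)) 2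
    · exact ((hfy.continuous_fderiv one_ne_zero).norm.pow 2).integrableOn_of_isBounded hQ
    · exact (((hf.continuous_fderiv one_ne_zero).norm.comp
        (continuous_id.prodMk continuous_const)).pow 2).integrableOn_of_isBounded hQ
  calc _ ≤ _ := setIntegral_Ioo_prod_Ioo_abs_sub_setAverage_pow_four_le hab hcd hfy
    _ ≤ _ := by gcongr; exact hvertical

theorem integral_setIntegral_abs_sub_setAverage_pow_four_le (hab : a < b) (hcd : c < d)
    (hf : ContDiff ℝ 1 f) (hzero : ∀ x ∈ Ioo a b ×ˢ Ioo c d, f (x, 0) = 0) :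
    ∫ y in Ioo (0 : ℝ) 1,
        ∫ x in Ioo a b ×ˢ Ioo c d, |f (x, y) - ⨍ z in Ioo a b ×ˢ Ioo c d, f (z, y)| ^ 4 ≤
      rectangleConst a b c d *
        (∫ z in (Ioo a b ×ˢ Ioo c d) ×ˢ Ioo (0 : ℝ) 1, ‖fderiv ℝ f z‖ ^ 2) ^ 2 := by
  set K := rectangleConst a b c d
  set R := ∫ z in (Ioo a b ×ˢ Ioo c d) ×ˢ Ioo (0 : ℝ) 1, ‖fderiv ℝ f z‖ ^ 2
  have hQm : MeasurableSet (Ioo a b ×ˢ Ioo c d) := measurableSet_Ioo.prod measurableSet_Ioo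
  have hDf2 : IntegrableOn (fun z ↦ ‖fderiv ℝ f z‖ ^ 2) ((Ioo a b ×ˢ Ioo c d) ×ˢ Ioo 0 1)
      (volume.prod volume) :=
    ((hf.continuous_fderiv one_ne_zero).norm.pow 2).integrableOn_of_isBounded
      (isBounded_Ioo_prod_Ioo.prod (Metric.isBounded_Ioo 0 1))
  have hR : ∫ y in Ioo (0 : ℝ) 1, ∫ x in Ioo a b ×ˢ Ioo c d, ‖fderiv ℝ f (x, y)‖ ^ 2 = R :=
    (setIntegral_prod_symm hDf2).symm
  calc _ ≤ ∫ y in Ioo (0 : ℝ) 1, K * R * ∫ x in Ioo a b ×ˢ Ioo c d, ‖fderiv ℝ f (x, y)‖ ^ 2 :=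
        integral_mono_of_nonneg (.of_forall fun y ↦ setIntegral_nonneg hQm fun _ _ ↦ by positivity)
          (hDf2.setIntegral_prod_right.const_mul _)
          (ae_restrict_of_forall_mem measurableSet_Ioo fun y hy ↦
            setIntegral_abs_sub_setAverage_slice_pow_four_le hab hcd hf hzero
              (Ioo_subset_Icc_self hy))
    _ = K * R ^ 2 := by rw [integral_const_mul, hR]; ring

end ThinDomain

theorem stmt4 (qa qb qc qd : ℝ) (hab : qa < qb) (hcd : qc < qd) :
    ∃ c : ℝ, 0 < c ∧ ∀ ε : ℝ, 0 < ε →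
      ∀ f : (ℝ × ℝ) × ℝ → ℝ, ContDiff ℝ 1 f →
        (∀ xh ∈ closure (Set.Ioo (ε * qa) (ε * qb) ×ˢ Set.Ioo (ε * qc) (ε * qd)),
          f (xh, 0) = 0 ∧ f (xh, 1) = 0) →
        (∫ y in Set.Ioo (0:ℝ) 1,
            ∫ xh in Set.Ioo (ε * qa) (ε * qb) ×ˢ Set.Ioo (ε * qc) (ε * qd),
              |f (xh, y)
                - ((volume (Set.Ioo (ε * qa) (ε * qb) ×ˢ Set.Ioo (ε * qc) (ε * qd))).toReal)⁻¹
                    * ∫ zh in Set.Ioo (ε * qa) (ε * qb) ×ˢ Set.Ioo (ε * qc) (ε * qd),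
                        f (zh, y)| ^ 4)
          ≤ c * (∫ z in (Set.Ioo (ε * qa) (ε * qb) ×ˢ Set.Ioo (ε * qc) (ε * qd)) ×ˢ
                    Set.Ioo (0:ℝ) 1, ‖fderiv ℝ f z‖ ^ 2) ^ 2 := by
  refine ⟨_, rectangleConst_pos hab hcd, fun ε hε f hf hzero ↦ ?_⟩
  rw [← rectangleConst_mul_left hε.ne']
  simp only [← measureReal_def, ← smul_eq_mul (a := (volume.real _)⁻¹), ← setAverage_eq]
  exact integral_setIntegral_abs_sub_setAverage_pow_four_le
    (mul_lt_mul_of_pos_left hab hε) (mul_lt_mul_of_pos_left hcd hε) hf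
    fun x hx ↦ (hzero x (subset_closure hx)).1
end

section
/- Let 𝓔 ≥ 0 be a function on (0,∞)² satisfying 𝓔(ρ,θ) ≥ c(|ρ−ρ̃|² + |θ−θ̃|²) whenever (ρ,θ) ∈ [ρ̲,ρ̄]×[θ̲,θ̄], and 𝓔(ρ,θ) ≥ c(1 + θ⁴) otherwise (for fixed ρ̃ ∈ [ρ̲,ρ̄], θ̃ ∈ [θ̲,θ̄], c > 0). Then for every measurable pair (ρ,θ) on a finite-measure set Ω ⊂ ℝ³ and every q ∈ [1,4], there is a constant C (independent of Ω and (ρ,θ)) such that ∫_Ω |[θ − θ̃]_res|^q dx ≤ C ∫_Ω 𝓔(ρ(x),θ(x)|ρ̃,θ̃) dx, where [·]_res denotes restriction to the 'residual' set {(ρ,θ) ∉ [ρ̲,ρ̄]×[θ̲,θ̄]}. -/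
open MeasureTheory Set Classical

theorem stmt18 (E : ℝ → ℝ → ℝ) (ρl ρu θl θu ρt θt c : ℝ)
    (hρl : 0 < ρl) (hρt : ρt ∈ Set.Icc ρl ρu)
    (hθl : 0 < θl) (hθt : θt ∈ Set.Icc θl θu) (hc : 0 < c)
    (hE0 : ∀ ρ θ : ℝ, 0 < ρ → 0 < θ → 0 ≤ E ρ θ)
    (hEss : ∀ ρ θ : ℝ, ρ ∈ Set.Icc ρl ρu → θ ∈ Set.Icc θl θu →
      c * (|ρ - ρt| ^ 2 + |θ - θt| ^ 2) ≤ E ρ θ)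
    (hres : ∀ ρ θ : ℝ, 0 < ρ → 0 < θ → ¬(ρ ∈ Set.Icc ρl ρu ∧ θ ∈ Set.Icc θl θu) →
      c * (1 + θ ^ 4) ≤ E ρ θ) :
    ∀ q : ℝ, 1 ≤ q → q ≤ 4 →
      ∃ C : ℝ, 0 < C ∧
        ∀ (Ω : Set (Fin 3 → ℝ)), MeasurableSet Ω → volume Ω < ⊤ →
        ∀ ρ θ : (Fin 3 → ℝ) → ℝ, Measurable ρ → Measurable θ →
          (∀ x, 0 < ρ x) → (∀ x, 0 < θ x) →
          (∫⁻ x in Ω, ENNReal.ofReal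
              (|if ρ x ∈ Set.Icc ρl ρu ∧ θ x ∈ Set.Icc θl θu then 0 else θ x - θt| ^ q))
            ≤ ENNReal.ofReal C * ∫⁻ x in Ω, ENNReal.ofReal (E (ρ x) (θ x)) := by
  intro q hq1 hq4
  have hθtpos : 0 < θt := lt_of_lt_of_le hθl hθt.1
  refine ⟨16 * (1 + θt) ^ 4 / c, by positivity, ?_⟩
  intro Ω hΩ hΩfin ρ θ hρm hθm hρpos hθpos
  rw [← lintegral_const_mul' _ _ ENNReal.ofReal_ne_top]
  refine lintegral_mono fun x => ?_
  rw [← ENNReal.ofReal_mul (by positivity)]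
  refine ENNReal.ofReal_le_ofReal ?_
  by_cases hbox : ρ x ∈ Set.Icc ρl ρu ∧ θ x ∈ Set.Icc θl θu
  · rw [if_pos hbox, abs_zero]
    rw [Real.zero_rpow (by linarith)]
    have := hE0 (ρ x) (θ x) (hρpos x) (hθpos x)
    positivity
  · rw [if_neg hbox]
    have hE := hres (ρ x) (θ x) (hρpos x) (hθpos x) hbox
    have key : |θ x - θt| ^ q ≤ 16 * (1 + θt) ^ 4 * (1 + θ x ^ 4) := by
      have h1 : |θ x - θt| ≤ (1 + θt) * (1 + θ x) := by
        have := abs_sub_abs_le_abs_sub (θ x) θt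
        have h2 : |θ x - θt| ≤ |θ x| + |θt| := abs_sub (θ x) θt
        rw [abs_of_pos (hθpos x), abs_of_pos hθtpos] at h2
        nlinarith [hθpos x, hθtpos]
      have hb1 : (1:ℝ) ≤ (1 + θt) * (1 + θ x) := by nlinarith [hθpos x, hθtpos]
      calc |θ x - θt| ^ q ≤ ((1 + θt) * (1 + θ x)) ^ q :=
            Real.rpow_le_rpow (abs_nonneg _) h1 (by linarith)
        _ ≤ ((1 + θt) * (1 + θ x)) ^ (4:ℝ) :=
            Real.rpow_le_rpow_of_exponent_le hb1 hq4
        _ = ((1 + θt) * (1 + θ x)) ^ (4:ℕ) := by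
            rw [← Real.rpow_natCast]; norm_num
        _ ≤ 16 * (1 + θt) ^ 4 * (1 + θ x ^ 4) := by
            have h4 : (1 + θ x) ^ 4 ≤ 16 * (1 + θ x ^ 4) := by
              nlinarith [sq_nonneg (θ x), sq_nonneg (1 - θ x), sq_nonneg (θ x ^ 2 - 1),
                (hθpos x).le, sq_nonneg (θ x ^ 2 - θ x)]
            calc ((1 + θt) * (1 + θ x)) ^ 4 = (1 + θt) ^ 4 * (1 + θ x) ^ 4 := by ring
              _ ≤ (1 + θt) ^ 4 * (16 * (1 + θ x ^ 4)) := by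
                  have : (0:ℝ) ≤ (1 + θt) ^ 4 := by positivity
                  nlinarith
              _ = 16 * (1 + θt) ^ 4 * (1 + θ x ^ 4) := by ring
    calc |θ x - θt| ^ q ≤ 16 * (1 + θt) ^ 4 * (1 + θ x ^ 4) := key
      _ = 16 * (1 + θt) ^ 4 / c * (c * (1 + θ x ^ 4)) := by field_simp
      _ ≤ 16 * (1 + θt) ^ 4 / c * E (ρ x) (θ x) := by
          have : (0:ℝ) ≤ 16 * (1 + θt) ^ 4 / c := by positivity
          nlinarith
end
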